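/- Let μ ∈ G_1, and write R_μ(z) = z + Σ_{n≥2} α_n z^n and 1/S_μ(z) = 1 + Σ_{n≥1} γ_n z^n, where 1/S_μ is the multiplicative inverse of the S-transform in ℂ[[z]]. Then for every n ≥ 2, α_n = Σ_{π = {A_1,…,A_q} ∈ NC(n−1)} γ_{|A_1|}⋯γ_{|A_q|}. -/

import Mathlib

open scoped TensorProduct

noncomputable section

namespace FreeProb

attribute [local instance] Classical.propDecidable

/-! ### Non-crossing partitions of `{1,…,n}`, modelled as setoids on `Fin n` -/

/-- The partition `0_n` of `Fin n` into singletons. -/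
def botS (n : ℕ) : Setoid (Fin n) := ⟨Eq, eq_equivalence⟩

/-- The partition `1_n` of `Fin n` with a single block. -/
def topS (n : ℕ) : Setoid (Fin n) :=
  ⟨fun _ _ => True, ⟨fun _ => trivial, fun _ => trivial, fun _ _ => trivial⟩⟩

/-- A partition is non-crossing if there is no crossing `a < b < c < d` with
`a ∼ c`, `b ∼ d` lying in different blocks. -/
def IsNC {n : ℕ} (s : Setoid (Fin n)) : Prop :=
  ∀ a b c d : Fin n, a < b → b < c → c < d → s.r a c → s.r b d → s.r a b

/-- The lattice `NC(n)` of non-crossing partitions, ordered by reversed refinement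
(the order inherited from the lattice of setoids). -/
abbrev NC (n : ℕ) := {s : Setoid (Fin n) // IsNC s}

instance (n : ℕ) : Finite (Setoid (Fin n)) :=
  Finite.of_injective (fun s => s.r) (by intro s t h; cases s; cases t; cases h; rfl)

noncomputable instance (n : ℕ) : Fintype (Setoid (Fin n)) := Fintype.ofFinite _

noncomputable instance (n : ℕ) : Fintype (NC n) := Fintype.ofFinite _

/-- `0_n` as a non-crossing partition. -/
def ncBot (n : ℕ) : NC n :=
  ⟨botS n, by
    intro a b c d h1 h2 h3 hac _
    have hac' : a = c := hac
    subst hac'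
    exact absurd (h1.trans h2) (lt_irrefl _)⟩

/-- `1_n` as a non-crossing partition. -/
def ncTop (n : ℕ) : NC n := ⟨topS n, fun _ _ _ _ _ _ _ _ _ => trivial⟩

/-- The blocks of a partition, as a finset of finsets. -/
def blocks {n : ℕ} (s : Setoid (Fin n)) : Finset (Finset (Fin n)) :=
  Finset.univ.image fun a => Finset.univ.filter fun b => s.r a b

/-- The next element of the block of `b`, in increasing cyclic order. -/
def nextFun {n : ℕ} (s : Setoid (Fin n)) (b : Fin n) : Fin n :=
  let B : Finset (Fin n) := Finset.univ.filter fun a => s.r b a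
  let A : Finset (Fin n) := B.filter fun a => b < a
  if h : A.Nonempty then A.min' h
  else B.min' ⟨b, Finset.mem_filter.mpr ⟨Finset.mem_univ b, s.iseqv.refl b⟩⟩

/-- The permutation `P_π` associated to a partition `π`: its cycles are the blocks
of `π`, traversed in increasing order.  (The function `nextFun` is indeed bijective,
so the `dite` below always takes its first branch.) -/
def permOf {n : ℕ} (s : Setoid (Fin n)) : Equiv.Perm (Fin n) :=
  if h : Function.Bijective (nextFun s) then Equiv.ofBijective _ h else 1

/-- The partition of `Fin n` into the cycles (orbits) of a permutation. -/
def cycleSetoid {n : ℕ} (σ : Equiv.Perm (Fin n)) : Setoid (Fin n) :=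
  ⟨σ.SameCycle, ⟨fun x => Equiv.Perm.SameCycle.refl σ x, fun h => h.symm, fun h h' => h.trans h'⟩⟩

/-- The Kreweras complement `K(π)`, determined by `P_{K(π)} = P_π⁻¹ * P_{1_n}`. -/
def kreweras {n : ℕ} (s : Setoid (Fin n)) : Setoid (Fin n) :=
  cycleSetoid ((permOf s)⁻¹ * permOf (topS n))

/-- The relative Kreweras complement `K_t(s)`, determined by `P_{K_t(s)} = P_s⁻¹ * P_t`. -/
def relKreweras {n : ℕ} (s t : Setoid (Fin n)) : Setoid (Fin n) :=
  cycleSetoid ((permOf s)⁻¹ * permOf t)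

/-! ### Words, and the Hopf algebra `Y^(k)` -/

/-- Words over the alphabet `{1,…,k}`, encoded as pairs `⟨n, w⟩` with `w : Fin n → Fin k`. -/
abbrev WordIdx (k : ℕ) := Σ n : ℕ, Fin n → Fin k

/-- The commutative polynomial algebra `Y^(k) = ℂ[Y_w : |w| ≥ 2]`. -/
abbrev Yalg (k : ℕ) := MvPolynomial {p : WordIdx k // 2 ≤ p.1} ℂ

/-- The generator `Y_w`, with the convention `Y_w = 1` for `|w| ≤ 1`. -/
def Ygen {k : ℕ} (p : WordIdx k) : Yalg k :=
  if h : 2 ≤ p.1 then MvPolynomial.X ⟨p, h⟩ else 1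

/-- The subword `w|B` of `w` on the positions in `B` (in increasing order). -/
def subword {k n : ℕ} (w : Fin n → Fin k) (B : Finset (Fin n)) : Fin B.card → Fin k :=
  fun i => w (B.orderIsoOfFin rfl i).1

/-- The element `Y_{w;π} = ∏_{B block of π} Y_{w|B}`. -/
def Yprod {k n : ℕ} (w : Fin n → Fin k) (s : Setoid (Fin n)) : Yalg k :=
  ∏ B ∈ blocks s, Ygen ⟨B.card, subword w B⟩

/-- The comultiplication of `Y^(k)`:
`Δ(Y_w) = ∑_{π ∈ NC(n)} Y_{w;π} ⊗ Y_{w;K(π)}`. -/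
def Δk (k : ℕ) : Yalg k →ₐ[ℂ] Yalg k ⊗[ℂ] Yalg k :=
  MvPolynomial.aeval fun q : {p : WordIdx k // 2 ≤ p.1} =>
    ∑ π : NC q.1.1, Yprod q.1.2 π.1 ⊗ₜ[ℂ] Yprod q.1.2 (kreweras π.1)

/-- The counit of `Y^(k)`: `ε(Y_w) = 0` for `|w| ≥ 2`. -/
def εk (k : ℕ) : Yalg k →ₐ[ℂ] ℂ := MvPolynomial.aeval fun _ => 0

/-- The grading of `Y^(k)` in which `Y_w` is homogeneous of degree `|w| - 1`. -/
def Ycomp (k n : ℕ) : Submodule ℂ (Yalg k) :=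
  MvPolynomial.weightedHomogeneousSubmodule ℂ (fun q : {p : WordIdx k // 2 ≤ p.1} => q.1.1 - 1) n

/-! ### Convolution of linear functionals on a bialgebra -/

variable {A : Type} [CommRing A] [Algebra ℂ A]

/-- Convolution `ξη := mult ∘ (ξ ⊗ η) ∘ Δ` of two linear functionals. -/
def convF (D : A →ₐ[ℂ] A ⊗[ℂ] A) (ξ η : A →ₗ[ℂ] ℂ) : A →ₗ[ℂ] ℂ :=
  LinearMap.mul' ℂ ℂ ∘ₗ TensorProduct.map ξ η ∘ₗ D.toLinearMap

/-- Convolution powers `ξ^m`, with `ξ^0 := e` (the counit). -/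
def convPowF (D : A →ₐ[ℂ] A ⊗[ℂ] A) (e ξ : A →ₗ[ℂ] ℂ) : ℕ → (A →ₗ[ℂ] ℂ)
  | 0 => e
  | m + 1 => convF D (convPowF D e ξ m) ξ

/-- `(log η)(x) = -∑_{ℓ ≥ 1} (1/ℓ) (e - η)^ℓ (x)`, the logarithm of a functional `η`
with respect to convolution (`e` is the counit).  On each `x` the sum has only finitely
many nonzero terms, so the `tsum` below is the honest value. -/
def logFunF (D : A →ₐ[ℂ] A ⊗[ℂ] A) (e η : A →ₗ[ℂ] ℂ) (x : A) : ℂ :=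
  -∑' ℓ : ℕ, (1 / ((ℓ : ℂ) + 1)) * convPowF D e (e - η) (ℓ + 1) x

/-! ### Distributions, R-transforms, free multiplicative convolution -/

/-- A distribution (or a family of coefficients of a power series in `k` non-commuting
indeterminates), encoded by its values on all words. -/
abbrev Dist (k : ℕ) := WordIdx k → ℂ

/-- `μ ∈ G_k`: `μ(1) = 1` and `μ(X_i) = 1` for all `i`. -/
def InG {k : ℕ} (μ : Dist k) : Prop :=
  (∀ w : Fin 0 → Fin k, μ ⟨0, w⟩ = 1) ∧ (∀ w : Fin 1 → Fin k, μ ⟨1, w⟩ = 1)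

/-- `Cf_{w;π}(f) = ∏_{B block of π} Cf_{w|B}(f)`, for a coefficient family `α`. -/
def cfPart {k n : ℕ} (α : Dist k) (w : Fin n → Fin k) (s : Setoid (Fin n)) : ℂ :=
  ∏ B ∈ blocks s, α ⟨B.card, subword w B⟩

/-- `α` is (the coefficient family of) the R-transform of `μ`:
the moment–cumulant relations hold. -/
def IsRTransform {k : ℕ} (μ α : Dist k) : Prop :=
  (∀ w : Fin 0 → Fin k, α ⟨0, w⟩ = 0) ∧
  ∀ (n : ℕ) (w : Fin n → Fin k), 1 ≤ n → μ ⟨n, w⟩ = ∑ π : NC n, cfPart α w π.1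

/-- `γ` is the R-transform of the free multiplicative convolution of distributions
with R-transforms `α` and `β`:
`Cf_w(R_{μ⊠ν}) = ∑_{π ∈ NC(n)} Cf_{w;π}(R_μ) Cf_{w;K(π)}(R_ν)`. -/
def IsBoxtimes {k : ℕ} (α β γ : Dist k) : Prop :=
  ∀ (n : ℕ) (w : Fin n → Fin k), 1 ≤ n →
    γ ⟨n, w⟩ = ∑ π : NC n, cfPart α w π.1 * cfPart β w (kreweras π.1)

/-- The unit `μ_o` of `(G_k, ⊠)`: all moments equal to `1`. -/
def distUnit (k : ℕ) : Dist k := fun _ => 1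

/-- The character `χ_μ` of `Y^(k)` associated to a distribution with R-transform `α`:
`χ_μ(Y_w) = Cf_w(R_μ)`. -/
def charOf {k : ℕ} (α : Dist k) : Yalg k →ₐ[ℂ] ℂ :=
  MvPolynomial.aeval fun q => α q.1

/-- The generalized coefficient `Cf_w^(Γ)(f) = ∏_{j=1}^{ℓ} Cf_{w;K_{π_j}(π_{j-1})}(f)`
attached to a (multi-)chain `Γ = (π_0,…,π_{m+1})` in `NC(n)`. -/
def cfChain {k n : ℕ} (α : Dist k) (w : Fin n → Fin k) (m : ℕ)
    (c : Fin (m + 2) → Setoid (Fin n)) : ℂ :=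
  ∏ j : Fin (m + 1), cfPart α w (relKreweras (c j.castSucc) (c j.succ))

/-- The `i`-th marginal coefficients: the free cumulants of the `i`-th marginal `μ_i`
are `Cf_{(i,…,i)}(R_μ)`. -/
def margFam {k : ℕ} (α : Dist k) (i : Fin k) : Dist 1 := fun q => α ⟨q.1, fun _ => i⟩


/-! ### Iterated comultiplication -/

/-- The iterated tensor powers `Y^(k) ⊗ ⋯ ⊗ Y^(k)` (`m+1` factors), as objects of
`ModuleCat ℂ` so that the recursion carries its module structure. -/
def YpowM (k : ℕ) : ℕ → ModuleCat ℂ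
  | 0 => ModuleCat.of ℂ (Yalg k)
  | m + 1 => ModuleCat.of ℂ (Yalg k ⊗[ℂ] YpowM k m)

/-- The iterated comultiplication: `Δiter k m = Δ^{m+1}` in the notation of the paper
(`Δiter k 0 = id`, `Δiter k (m+1) = (id ⊗ Δ^{m+1}) ∘ Δ`). -/
def Δiter (k : ℕ) : ∀ m : ℕ, Yalg k →ₗ[ℂ] YpowM k m
  | 0 => LinearMap.id
  | m + 1 => TensorProduct.map LinearMap.id (Δiter k m) ∘ₗ (Δk k).toLinearMap

/-- The pure tensor `Y_{w;K_{π_1}(π_0)} ⊗ ⋯ ⊗ Y_{w;K_{π_{m+1}}(π_m)}` attached to a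
multi-chain `(π_0, …, π_{m+1})`. -/
def chainTensor {k n : ℕ} (w : Fin n → Fin k) :
    ∀ m : ℕ, (Fin (m + 2) → Setoid (Fin n)) → YpowM k m
  | 0, c => Yprod w (relKreweras (c 0) (c 1))
  | m + 1, c => Yprod w (relKreweras (c 0) (c 1)) ⊗ₜ[ℂ] chainTensor w m (fun i => c i.succ)


/-! ### One-variable power series tools -/

/-- The R-transform of a one-variable distribution, as a power series. -/
def Rser (α : Dist 1) : PowerSeries ℂ :=
  PowerSeries.mk fun m => if m = 0 then 0 else α ⟨m, fun _ => 0⟩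

/-- Composition `f ∘ g` of formal power series (the honest composition whenever
`g` has vanishing constant term). -/
def psComp (f g : PowerSeries ℂ) : PowerSeries ℂ :=
  PowerSeries.mk fun m =>
    ∑ j ∈ Finset.range (m + 1), PowerSeries.coeff (R := ℂ) j f * PowerSeries.coeff (R := ℂ) m (g ^ j)

/-- `S` is the S-transform of the distribution with R-transform `α`:
`S(z) = (1/z)·R^{⟨-1⟩}(z)`, i.e. `z·S(z)` is the compositional inverse of `R`. -/
def SChar (α : Dist 1) (S : PowerSeries ℂ) : Prop :=
  PowerSeries.constantCoeff (R := ℂ) S = 1 ∧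
  psComp (Rser α) (PowerSeries.X * S) = PowerSeries.X ∧
  psComp (PowerSeries.X * S) (Rser α) = PowerSeries.X

/-- The formal logarithm `log f = -∑_{ℓ≥1} (1/ℓ)(1-f)^ℓ = ∑_{ℓ≥1} ((-1)^{ℓ+1}/ℓ)(f-1)^ℓ`
of a power series (the honest logarithm whenever `f` has constant term 1). -/
def psLog {B : Type} [CommRing B] [Algebra ℂ B] (f : PowerSeries B) : PowerSeries B :=
  PowerSeries.mk fun m =>
    ∑ ℓ ∈ Finset.range (m + 1), ((-1 : ℂ) ^ (ℓ + 1) / ℓ) • PowerSeries.coeff (R := B) m ((f - 1) ^ ℓ)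

/-- The coefficient-wise LS-transform of a one-variable distribution, as a power series. -/
def LSseries (α : Dist 1) : PowerSeries ℂ :=
  PowerSeries.mk fun n =>
    if 2 ≤ n then
      logFunF (Δk 1) (εk 1).toLinearMap (charOf α).toLinearMap (Ygen ⟨n, fun _ => 0⟩)
    else 0

/-! ### The Hopf algebra `Sym` of symmetric functions -/

/-- `Sym`, realized as the free commutative algebra on the complete homogeneous
symmetric functions `h_1, h_2, …`. -/
abbrev SymA := MvPolynomial {m : ℕ // 1 ≤ m} ℂ

/-- The complete homogeneous symmetric function `h_m` (with `h_0 = 1`). -/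
def Hgen (m : ℕ) : SymA := if h : 1 ≤ m then MvPolynomial.X ⟨m, h⟩ else 1

/-- The comultiplication of `Sym`: `Δ(h_n) = ∑_{i=0}^n h_i ⊗ h_{n-i}`. -/
def ΔSym : SymA →ₐ[ℂ] SymA ⊗[ℂ] SymA :=
  MvPolynomial.aeval fun q : {m : ℕ // 1 ≤ m} =>
    ∑ i ∈ Finset.range (q.1 + 1), Hgen i ⊗ₜ[ℂ] Hgen (q.1 - i)

/-- The counit of `Sym`. -/
def εSym : SymA →ₐ[ℂ] ℂ := MvPolynomial.aeval fun _ => 0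

/-- The generating series `h(z) = 1 + ∑ (-1)^n h_n z^n`. -/
def hSymSeries : PowerSeries SymA :=
  PowerSeries.mk fun m => if m = 0 then 1 else (-1 : SymA) ^ m * Hgen m

/-- The generating series `e(z) = 1 + ∑ e_n z^n = 1/h(z)`. -/
def eSymSeries : PowerSeries SymA := PowerSeries.invOfUnit hSymSeries 1

/-- The elementary symmetric function `e_m`, defined through `e(z) = 1/h(z)`. -/
def eSym (m : ℕ) : SymA := PowerSeries.coeff (R := SymA) m eSymSeries

/-- The power sum symmetric function `p_m`, defined through
`log e(z) = ∑_{m≥1} ((-1)^{m+1}/m) p_m z^m`. -/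
def pSym (m : ℕ) : SymA :=
  ((-1 : ℂ) ^ (m + 1) * m) • PowerSeries.coeff (R := SymA) m (psLog eSymSeries)

/-- The grading of `Sym` (`h_n` homogeneous of degree `n`). -/
def SymComp (n : ℕ) : Submodule ℂ SymA :=
  MvPolynomial.weightedHomogeneousSubmodule ℂ (fun q : {m : ℕ // 1 ≤ m} => q.1) n

/-- The symmetric function `y_n = ∑_{π ∈ NC(n-1)} ∏_{B block of π} e_{|B|}`. -/
def ySym (n : ℕ) : SymA := ∑ π : NC (n - 1), ∏ B ∈ blocks π.1, eSym B.card

/-- The homomorphism `Φ : Y^(1) → Sym`, `Φ(Y_n) = y_n`. -/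
def Phi : Yalg 1 →ₐ[ℂ] SymA := MvPolynomial.aeval fun q => ySym q.1.1

/-- The character `θ_μ` of `Sym` attached to a distribution with S-transform `S`:
`θ_μ(h_n) = (-1)^n β_n` where `S(z) = 1 + ∑ β_n z^n`. -/
def thetaOf (S : PowerSeries ℂ) : SymA →ₐ[ℂ] ℂ :=
  MvPolynomial.aeval fun q : {m : ℕ // 1 ≤ m} =>
    (-1 : ℂ) ^ q.1 * PowerSeries.coeff (R := ℂ) q.1 S

/-- Infinitesimal characters of `Sym`. -/
def IsInfCharSym (ξ : SymA →ₗ[ℂ] ℂ) : Prop :=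
  ∀ u v : SymA, ξ (u * v) = ξ u * εSym v + εSym u * ξ v

/-!
Let `γ_k` be the coefficients of `T = 1/S` and `B(z) = ∑_d (∑_{π ∈ NC(d)} ∏_{A ∈ π} γ_{|A|}) z^d`.
Split a non-crossing partition of `{0, …, m}` at the second element of the block of `0`: the
part in between is an arbitrary non-crossing partition, and the block of `0` passes on to the
rest with one more element. Weighting the block of `0` as if it had `r` extra elements, the
resulting series satisfy `C_r = γ_r + z B C_{r+1}` and `C_0 = B`, which unrolls to `B = T(z B)`.
Then `(z S)(z B) = z · (T S)(z B) = z`, so `z B` is a right inverse of `z S` for composition;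
as `R` is a left inverse, `R = z B`, and comparing coefficients gives the formula.
-/

section PowerSeriesComp

open PowerSeries

variable {R : Type*} [CommRing R]

lemma coeff_pow_mul_eq_zero_of_lt {g : R⟦X⟧} (hg : constantCoeff g = 0) (q : R⟦X⟧) {m j : ℕ}
    (h : m < j) : coeff m (g ^ j * q) = 0 := by
  obtain ⟨p, hp⟩ : X ^ j ∣ g ^ j * q :=
    (pow_dvd_pow_of_dvd (X_dvd_iff.mpr hg) j).mul_right q
  rw [hp, coeff_X_pow_mul', if_neg (by omega)]

lemma psComp_eq_subst {g : ℂ⟦X⟧} (hg : constantCoeff g = 0) (f : ℂ⟦X⟧) :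
    psComp f g = f.subst g := by
  ext m
  rw [psComp, coeff_mk, coeff_subst' (HasSubst.of_constantCoeff_zero' hg),
    finsum_eq_sum_of_support_subset _ (s := Finset.range (m + 1))]
  · simp only [smul_eq_mul]
  · intro j hj
    rw [Function.mem_support] at hj
    rw [Finset.coe_range, Set.mem_Iio, Nat.lt_succ_iff]
    by_contra! hmj
    exact hj (by rw [← mul_one (g ^ j), coeff_pow_mul_eq_zero_of_lt hg 1 hmj, smul_zero])

lemma eq_of_subst_eq_X {f g h : R⟦X⟧} (hg : HasSubst g) (hh : HasSubst h)
    (hfg : f.subst g = X) (hgh : g.subst h = X) : f = h := by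
  rw [← X_subst f, ← hgh, ← subst_comp_subst_apply hg hh, hfg, subst_X hh]

lemma subst_X_mul_eq_X {S T F : R⟦X⟧} (hF : HasSubst F) (hST : S * T = 1)
    (hFT : F = X * T.subst F) : (X * S).subst F = X := by
  rw [subst_mul hF, subst_X hF]
  nth_rw 1 [hFT]
  rw [mul_assoc, ← subst_mul hF, mul_comm T, hST, ← map_one (C (R := R)), subst_C, map_one,
    mul_one]

end PowerSeriesComp

section Blocks

variable {n : ℕ}

def blockOf (s : Setoid (Fin n)) (a : Fin n) : Finset (Fin n) :=
  Finset.univ.filter fun b => s.r a b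

lemma mem_blockOf {s : Setoid (Fin n)} {a b : Fin n} : b ∈ blockOf s a ↔ s.r a b := by
  simp [blockOf]

lemma mem_blockOf_self (s : Setoid (Fin n)) (a : Fin n) : a ∈ blockOf s a :=
  mem_blockOf.2 (s.iseqv.refl a)

lemma blockOf_eq_of_rel {s : Setoid (Fin n)} {a b : Fin n} (h : s.r a b) :
    blockOf s a = blockOf s b := by
  ext c
  simp only [mem_blockOf]
  exact ⟨s.iseqv.trans (s.iseqv.symm h), s.iseqv.trans h⟩

lemma blockOf_eq_blockOf_iff {s : Setoid (Fin n)} {a b : Fin n} :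
    blockOf s a = blockOf s b ↔ s.r a b :=
  ⟨fun h => mem_blockOf.1 (h ▸ mem_blockOf_self s b), blockOf_eq_of_rel⟩

lemma mem_blocks {s : Setoid (Fin n)} {B : Finset (Fin n)} :
    B ∈ blocks s ↔ ∃ a, B = blockOf s a := by
  simp [blocks, blockOf, eq_comm]

lemma nonempty_of_mem_blocks {s : Setoid (Fin n)} {B : Finset (Fin n)} (h : B ∈ blocks s) :
    B.Nonempty := by
  obtain ⟨a, rfl⟩ := mem_blocks.1 h
  exact ⟨a, mem_blockOf_self s a⟩

lemma blocks_of_isEmpty (s : Setoid (Fin 0)) : blocks s = ∅ := by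
  simp [blocks]

/-- The block of `0`; quantifying over all `a` with `a.1 = 0` makes it `∅` on `Fin 0`. -/
def rootBlock (s : Setoid (Fin n)) : Finset (Fin n) :=
  Finset.univ.filter fun b => ∀ a : Fin n, a.1 = 0 → s.r a b

lemma mem_rootBlock {s : Setoid (Fin n)} {b : Fin n} :
    b ∈ rootBlock s ↔ ∀ a : Fin n, a.1 = 0 → s.r a b := by
  simp [rootBlock]

lemma rootBlock_eq_blockOf (s : Setoid (Fin n)) {z : Fin n} (hz : z.1 = 0) :
    rootBlock s = blockOf s z := by
  ext b
  rw [mem_rootBlock, mem_blockOf]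
  refine ⟨fun h => h z hz, fun h a ha => ?_⟩
  rwa [show a = z from Fin.ext (ha.trans hz.symm)]

lemma mem_rootBlock_of_val_eq_zero (s : Setoid (Fin n)) {z : Fin n} (hz : z.1 = 0) :
    z ∈ rootBlock s := by
  rw [rootBlock_eq_blockOf s hz]
  exact mem_blockOf_self s z

lemma mem_rootBlock_iff_of_rel {s : Setoid (Fin n)} {a b : Fin n} (h : s.r a b) :
    a ∈ rootBlock s ↔ b ∈ rootBlock s := by
  simp only [mem_rootBlock]
  exact ⟨fun ha z hz => s.iseqv.trans (ha z hz) h,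
    fun hb z hz => s.iseqv.trans (hb z hz) (s.iseqv.symm h)⟩

lemma rel_of_mem_rootBlock {s : Setoid (Fin n)} {a b : Fin n} (ha : a ∈ rootBlock s)
    (hb : b ∈ rootBlock s) : s.r a b := by
  have hz : (⟨0, by have := a.isLt; omega⟩ : Fin n).1 = 0 := rfl
  exact s.iseqv.trans (s.iseqv.symm (mem_rootBlock.1 ha _ hz)) (mem_rootBlock.1 hb _ hz)

lemma blockOf_eq_rootBlock_iff {s : Setoid (Fin n)} {b : Fin n} :
    blockOf s b = rootBlock s ↔ b ∈ rootBlock s := by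
  refine ⟨fun h => h ▸ mem_blockOf_self s b, fun hb => ?_⟩
  have hz : (⟨0, by have := b.isLt; omega⟩ : Fin n).1 = 0 := rfl
  rw [rootBlock_eq_blockOf s hz]
  exact blockOf_eq_of_rel (s.iseqv.symm (mem_rootBlock.1 hb _ hz))

lemma rootBlock_of_isEmpty (s : Setoid (Fin 0)) : rootBlock s = ∅ := by
  simp [rootBlock]

lemma rootBlock_mem_blocks {m : ℕ} (s : Setoid (Fin (m + 1))) : rootBlock s ∈ blocks s :=
  mem_blocks.2 ⟨0, rootBlock_eq_blockOf s rfl⟩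

end Blocks

section Weights

variable (γ : ℕ → ℂ)

def partWeight {d : ℕ} (s : Setoid (Fin d)) : ℂ :=
  ∏ B ∈ blocks s, γ B.card

/-- The weight of a partition whose block of `0` carries `r` extra (virtual) elements. -/
def rootedWeight (r : ℕ) {d : ℕ} (s : Setoid (Fin d)) : ℂ :=
  γ ((rootBlock s).card + r) * ∏ B ∈ (blocks s).erase (rootBlock s), γ B.card

def ncSum (d : ℕ) : ℂ := ∑ π : NC d, partWeight γ π.1

def rootedNCSum (r d : ℕ) : ℂ := ∑ π : NC d, rootedWeight γ r π.1

instance : Subsingleton (Setoid (Fin 0)) :=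
  ⟨fun _ _ => Setoid.ext fun a => a.elim0⟩

lemma ncSum_zero : ncSum γ 0 = 1 := by
  rw [ncSum, Fintype.sum_subsingleton _ (ncBot 0), partWeight, blocks_of_isEmpty,
    Finset.prod_empty]

lemma rootedNCSum_zero (r : ℕ) : rootedNCSum γ r 0 = γ r := by
  rw [rootedNCSum, Fintype.sum_subsingleton _ (ncBot 0), rootedWeight, rootBlock_of_isEmpty,
    blocks_of_isEmpty, Finset.card_empty, zero_add, Finset.erase_empty, Finset.prod_empty,
    mul_one]

lemma ncSum_succ (m : ℕ) : ncSum γ (m + 1) = rootedNCSum γ 0 (m + 1) :=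
  Finset.sum_congr rfl fun π _ => by
    rw [partWeight, rootedWeight, ← Finset.mul_prod_erase _ _ (rootBlock_mem_blocks π.1)]
    rfl

end Weights

lemma IsNC.comap {n d : ℕ} {s : Setoid (Fin n)} (hs : IsNC s) {e : Fin d → Fin n}
    (he : StrictMono e) : IsNC (Setoid.comap e s) :=
  fun _ _ _ _ h₁ h₂ h₃ hac hbd => hs _ _ _ _ (he h₁) (he h₂) (he h₃) hac hbd

section RootGap

variable {m : ℕ} {s : Setoid (Fin (m + 1))}

def returnSet (s : Setoid (Fin (m + 1))) : Finset (Fin (m + 1)) := (blockOf s 0).erase 0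

/-- `rootGap s + 1` is the second element of the block of `0` (or `m + 1` if that block is
`{0}`), so that `{1, …, rootGap s}` is the gap in between. -/
def rootGap (s : Setoid (Fin (m + 1))) : ℕ :=
  if h : (returnSet s).Nonempty then ((returnSet s).min' h).1 - 1 else m

lemma mem_returnSet {x : Fin (m + 1)} : x ∈ returnSet s ↔ x ≠ 0 ∧ s.r 0 x := by
  rw [returnSet, Finset.mem_erase, mem_blockOf]

lemma rootGap_le (s : Setoid (Fin (m + 1))) : rootGap s ≤ m := by
  unfold rootGap
  split_ifs with h
  · have := ((returnSet s).min' h).isLt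
    omega
  · exact le_rfl

lemma rootGap_succ_le {y : Fin (m + 1)} (hy : s.r 0 y) (hy0 : y ≠ 0) : rootGap s + 1 ≤ y.1 := by
  have hmem : y ∈ returnSet s := mem_returnSet.2 ⟨hy0, hy⟩
  have hne : (returnSet s).Nonempty := ⟨y, hmem⟩
  have hle : ((returnSet s).min' hne).1 ≤ y.1 := (returnSet s).min'_le y hmem
  have hpos : ((returnSet s).min' hne).1 ≠ 0 := fun h =>
    (mem_returnSet.1 ((returnSet s).min'_mem hne)).1 (Fin.ext h)
  rw [rootGap, dif_pos hne]
  omega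

lemma rel_zero_of_val_eq_rootGap_succ {y : Fin (m + 1)} (hy : y.1 = rootGap s + 1) :
    s.r 0 y := by
  unfold rootGap at hy
  split_ifs at hy with h
  · have hmin := (returnSet s).min'_mem h
    have hpos : ((returnSet s).min' h).1 ≠ 0 := fun h0 => (mem_returnSet.1 hmin).1 (Fin.ext h0)
    rw [show y = (returnSet s).min' h from Fin.ext (by omega)]
    exact (mem_returnSet.1 hmin).2
  · exact absurd y.isLt (by omega)

lemma rel_zero_cases {y : Fin (m + 1)} (hy : s.r 0 y) : y = 0 ∨ rootGap s + 1 ≤ y.1 :=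
  or_iff_not_imp_left.2 (rootGap_succ_le hy)

lemma rootGap_eq {j : ℕ} (hj : j ≤ m) (hmin : ∀ y, s.r 0 y → y ≠ 0 → j + 1 ≤ y.1)
    (hrel : ∀ y : Fin (m + 1), y.1 = j + 1 → s.r 0 y) : rootGap s = j := by
  have hle : j ≤ rootGap s := by
    rcases Nat.lt_or_ge (rootGap s) m with h | h
    · have := hmin ⟨rootGap s + 1, by omega⟩ (rel_zero_of_val_eq_rootGap_succ rfl)
        (fun h0 => by simp [Fin.ext_iff] at h0)
      simpa using this
    · omega
  rcases Nat.lt_or_ge j m with h | h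
  · have := rootGap_succ_le (hrel ⟨j + 1, by omega⟩ rfl) (fun h0 => by simp [Fin.ext_iff] at h0)
    simp only at this
    omega
  · have := rootGap_le s
    omega

lemma rel_mem_gap (hs : IsNC s) {x y : Fin (m + 1)} (hx₁ : 1 ≤ x.1) (hxj : x.1 ≤ rootGap s)
    (hr : s.r x y) : 1 ≤ y.1 ∧ y.1 ≤ rootGap s := by
  have hx : ¬ s.r 0 x := fun h => by
    rcases rel_zero_cases h with h | h
    · simp [h] at hx₁
    · omega
  have hy₁ : 1 ≤ y.1 := by
    by_contra! h
    rw [show y = 0 from Fin.ext (by rw [Fin.val_zero]; omega)] at hr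
    exact hx (s.iseqv.symm hr)
  refine ⟨hy₁, not_lt.1 fun hgt => ?_⟩
  set z : Fin (m + 1) := ⟨rootGap s + 1, by have := y.isLt; omega⟩
  have hz : s.r 0 z := rel_zero_of_val_eq_rootGap_succ rfl
  rcases (show z.1 ≤ y.1 by simp only [z]; omega).eq_or_lt with heq | hlt
  · rw [← Fin.ext heq] at hr
    exact hx (s.iseqv.trans hz (s.iseqv.symm hr))
  · exact hx (hs 0 x z y (Fin.lt_def.2 (by rw [Fin.val_zero]; omega))
      (Fin.lt_def.2 (show x.1 < rootGap s + 1 by omega)) hlt hz hr)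

end RootGap

section Glue

variable {m : ℕ} (j : Fin (m + 1))

def gapEmb (a : Fin j.1) : Fin (m + 1) := ⟨a.1 + 1, by omega⟩

def tailEmb (b : Fin (m - j.1)) : Fin (m + 1) := ⟨b.1 + j.1 + 1, by omega⟩

@[simp] lemma gapEmb_val (a : Fin j.1) : (gapEmb j a).1 = a.1 + 1 := rfl

@[simp] lemma tailEmb_val (b : Fin (m - j.1)) : (tailEmb j b).1 = b.1 + j.1 + 1 := rfl

lemma gapEmb_strictMono : StrictMono (gapEmb j) := fun a b h => by
  simp only [Fin.lt_def, gapEmb_val] at h ⊢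
  omega

lemma tailEmb_strictMono : StrictMono (tailEmb j) := fun a b h => by
  simp only [Fin.lt_def, tailEmb_val] at h ⊢
  omega

@[simp] lemma gapEmb_ne_zero (a : Fin j.1) : gapEmb j a ≠ 0 :=
  fun h => absurd (congrArg Fin.val h) (by simp)

@[simp] lemma tailEmb_ne_zero (b : Fin (m - j.1)) : tailEmb j b ≠ 0 :=
  fun h => absurd (congrArg Fin.val h) (by simp)

@[simp] lemma gapEmb_ne_tailEmb (a : Fin j.1) (b : Fin (m - j.1)) : gapEmb j a ≠ tailEmb j b := by
  have := a.isLt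
  simp only [ne_eq, Fin.ext_iff, gapEmb_val, tailEmb_val]
  omega

@[simp] lemma tailEmb_ne_gapEmb (a : Fin j.1) (b : Fin (m - j.1)) : tailEmb j b ≠ gapEmb j a :=
  (gapEmb_ne_tailEmb j a b).symm

@[simp] lemma gapEmb_inj {a a' : Fin j.1} : gapEmb j a = gapEmb j a' ↔ a = a' :=
  (gapEmb_strictMono j).injective.eq_iff

@[simp] lemma tailEmb_inj {b b' : Fin (m - j.1)} : tailEmb j b = tailEmb j b' ↔ b = b' :=
  (tailEmb_strictMono j).injective.eq_iff

lemma eq_zero_or_gapEmb_or_tailEmb (x : Fin (m + 1)) :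
    x = 0 ∨ (∃ a, x = gapEmb j a) ∨ ∃ b, x = tailEmb j b := by
  rcases Nat.eq_zero_or_pos x.1 with h | h
  · exact Or.inl (Fin.ext h)
  by_cases hj : x.1 ≤ j.1
  · exact Or.inr (Or.inl ⟨⟨x.1 - 1, by omega⟩, Fin.ext (by simp only [gapEmb_val]; omega)⟩)
  · exact Or.inr (Or.inr ⟨⟨x.1 - j.1 - 1, by omega⟩, Fin.ext (by simp only [tailEmb_val]; omega)⟩)

/-- Labels the blocks of the partition of `{0, …, m}` that is `s₁` on the gap `{1, …, j}`,
`s₂` on the tail `{j + 1, …, m}`, except that `0` joins the block of `j + 1`;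
`none` labels the block of `0`. -/
def glueLabel (s₁ : Setoid (Fin j.1)) (s₂ : Setoid (Fin (m - j.1))) (x : Fin (m + 1)) :
    Option (Finset (Fin j.1) ⊕ Finset (Fin (m - j.1))) :=
  if h₀ : x.1 = 0 then none
  else if h : x.1 ≤ j.1 then some (.inl (blockOf s₁ ⟨x.1 - 1, by omega⟩))
  else if (⟨x.1 - j.1 - 1, by omega⟩ : Fin (m - j.1)) ∈ rootBlock s₂ then none
  else some (.inr (blockOf s₂ ⟨x.1 - j.1 - 1, by omega⟩))

def glue (s₁ : Setoid (Fin j.1)) (s₂ : Setoid (Fin (m - j.1))) : Setoid (Fin (m + 1)) :=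
  Setoid.ker (glueLabel j s₁ s₂)

variable {j} {s₁ : Setoid (Fin j.1)} {s₂ : Setoid (Fin (m - j.1))}

@[simp] lemma glueLabel_zero : glueLabel j s₁ s₂ 0 = none := by
  simp [glueLabel]

@[simp] lemma glueLabel_gapEmb (a : Fin j.1) :
    glueLabel j s₁ s₂ (gapEmb j a) = some (.inl (blockOf s₁ a)) := by
  have := a.isLt
  simp [glueLabel, show a.1 + 1 ≤ j.1 by omega]

lemma glueLabel_tailEmb (b : Fin (m - j.1)) : glueLabel j s₁ s₂ (tailEmb j b) =
    if b ∈ rootBlock s₂ then none else some (.inr (blockOf s₂ b)) := by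
  have h : b.1 + j.1 + 1 - j.1 - 1 = b.1 := by omega
  simp [glueLabel, show ¬ b.1 + j.1 + 1 ≤ j.1 by omega, h]

lemma glue_rel_iff {x y : Fin (m + 1)} :
    (glue j s₁ s₂).r x y ↔ glueLabel j s₁ s₂ x = glueLabel j s₁ s₂ y := Iff.rfl

lemma glue_rel_gapEmb {a b : Fin j.1} :
    (glue j s₁ s₂).r (gapEmb j a) (gapEmb j b) ↔ s₁.r a b := by
  simp [glue_rel_iff, blockOf_eq_blockOf_iff]

lemma glue_rel_tailEmb {a b : Fin (m - j.1)} :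
    (glue j s₁ s₂).r (tailEmb j a) (tailEmb j b) ↔ s₂.r a b := by
  rw [glue_rel_iff, glueLabel_tailEmb, glueLabel_tailEmb]
  by_cases ha : a ∈ rootBlock s₂ <;> by_cases hb : b ∈ rootBlock s₂
  · simp [ha, hb, rel_of_mem_rootBlock ha hb]
  · simpa [ha, hb] using fun h => hb ((mem_rootBlock_iff_of_rel h).1 ha)
  · simpa [ha, hb] using fun h => ha ((mem_rootBlock_iff_of_rel h).2 hb)
  · simp [ha, hb, blockOf_eq_blockOf_iff]

lemma glue_rel_zero_tailEmb {b : Fin (m - j.1)} :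
    (glue j s₁ s₂).r 0 (tailEmb j b) ↔ b ∈ rootBlock s₂ := by
  rw [glue_rel_iff, glueLabel_tailEmb, glueLabel_zero]
  split_ifs with h <;> simp [h]

lemma not_glue_rel_zero_gapEmb {a : Fin j.1} : ¬ (glue j s₁ s₂).r 0 (gapEmb j a) := by
  simp [glue_rel_iff]

lemma not_glue_rel_gapEmb_tailEmb {a : Fin j.1} {b : Fin (m - j.1)} :
    ¬ (glue j s₁ s₂).r (gapEmb j a) (tailEmb j b) := by
  rw [glue_rel_iff, glueLabel_tailEmb, glueLabel_gapEmb]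
  split_ifs <;> simp

end Glue

section GlueNC

variable {m : ℕ} {j : Fin (m + 1)} {s₁ : Setoid (Fin j.1)} {s₂ : Setoid (Fin (m - j.1))}

lemma exists_eq_tailEmb_of_lt {b : Fin (m - j.1)} {y : Fin (m + 1)} (h : tailEmb j b < y) :
    ∃ c, y = tailEmb j c := by
  rw [Fin.lt_def, tailEmb_val] at h
  rcases eq_zero_or_gapEmb_or_tailEmb j y with rfl | ⟨a, rfl⟩ | hy
  · simp at h
  · have := a.isLt
    simp only [gapEmb_val] at h
    omega
  · exact hy

lemma exists_eq_gapEmb_of_lt {a : Fin j.1} {y : Fin (m + 1)} (h₀ : 0 < y)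
    (h : y < gapEmb j a) : ∃ c, y = gapEmb j c := by
  rw [Fin.lt_def, gapEmb_val] at h
  rcases eq_zero_or_gapEmb_or_tailEmb j y with rfl | hy | ⟨b, rfl⟩
  · exact absurd h₀ (lt_irrefl 0)
  · exact hy
  · have := a.isLt
    simp only [tailEmb_val] at h
    omega

lemma glue_rel_zero_cases {y : Fin (m + 1)} (h : (glue j s₁ s₂).r 0 y) :
    y = 0 ∨ ∃ b ∈ rootBlock s₂, y = tailEmb j b := by
  rcases eq_zero_or_gapEmb_or_tailEmb j y with rfl | ⟨a, rfl⟩ | ⟨b, rfl⟩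
  · exact Or.inl rfl
  · exact absurd h not_glue_rel_zero_gapEmb
  · exact Or.inr ⟨b, glue_rel_zero_tailEmb.1 h, rfl⟩

lemma exists_eq_gapEmb_of_glue_rel {a : Fin j.1} {y : Fin (m + 1)}
    (h : (glue j s₁ s₂).r (gapEmb j a) y) : ∃ c, y = gapEmb j c := by
  rcases eq_zero_or_gapEmb_or_tailEmb j y with rfl | hy | ⟨b, rfl⟩
  · exact absurd ((glue j s₁ s₂).iseqv.symm h) not_glue_rel_zero_gapEmb
  · exact hy
  · exact absurd h not_glue_rel_gapEmb_tailEmb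

lemma glue_isNC (h₁ : IsNC s₁) (h₂ : IsNC s₂) : IsNC (glue j s₁ s₂) := by
  intro a b c d hab hbc hcd hac hbd
  rcases eq_zero_or_gapEmb_or_tailEmb j a with rfl | ⟨a, rfl⟩ | ⟨a, rfl⟩
  · obtain rfl | ⟨c, hc, rfl⟩ := glue_rel_zero_cases hac
    · exact absurd (hab.trans hbc) (lt_irrefl 0)
    obtain ⟨d, rfl⟩ := exists_eq_tailEmb_of_lt hcd
    rcases eq_zero_or_gapEmb_or_tailEmb j b with rfl | ⟨b, rfl⟩ | ⟨b, rfl⟩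
    · exact absurd hab (lt_irrefl 0)
    · exact absurd hbd not_glue_rel_gapEmb_tailEmb
    rw [glue_rel_tailEmb] at hbd
    rw [(tailEmb_strictMono j).lt_iff_lt] at hbc hcd
    rw [glue_rel_zero_tailEmb]
    let z : Fin (m - j.1) := ⟨0, by have := b.isLt; omega⟩
    rcases Nat.eq_zero_or_pos b.1 with hb | hb
    · exact mem_rootBlock_of_val_eq_zero s₂ hb
    · have hzb := h₂ z b c d (Fin.lt_def.2 hb) hbc hcd (mem_rootBlock.1 hc z rfl) hbd
      exact (mem_rootBlock_iff_of_rel hzb).1 (mem_rootBlock_of_val_eq_zero s₂ rfl)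
  · obtain ⟨c, rfl⟩ := exists_eq_gapEmb_of_glue_rel hac
    have h₀ : (0 : Fin (m + 1)) < gapEmb j a := Fin.lt_def.2 (by simp)
    obtain ⟨b, rfl⟩ := exists_eq_gapEmb_of_lt (h₀.trans hab) hbc
    obtain ⟨d, rfl⟩ := exists_eq_gapEmb_of_glue_rel hbd
    simp only [glue_rel_gapEmb, (gapEmb_strictMono j).lt_iff_lt] at *
    exact h₁ a b c d hab hbc hcd hac hbd
  · obtain ⟨b, rfl⟩ := exists_eq_tailEmb_of_lt hab
    obtain ⟨c, rfl⟩ := exists_eq_tailEmb_of_lt hbc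
    obtain ⟨d, rfl⟩ := exists_eq_tailEmb_of_lt hcd
    simp only [glue_rel_tailEmb, (tailEmb_strictMono j).lt_iff_lt] at *
    exact h₂ a b c d hab hbc hcd hac hbd

end GlueNC

section GlueBlocks

variable {m : ℕ} {j : Fin (m + 1)} {s₁ : Setoid (Fin j.1)} {s₂ : Setoid (Fin (m - j.1))}

lemma blockOf_glue_zero :
    blockOf (glue j s₁ s₂) 0 = insert 0 ((rootBlock s₂).image (tailEmb j)) := by
  ext y
  rcases eq_zero_or_gapEmb_or_tailEmb j y with rfl | ⟨a, rfl⟩ | ⟨b, rfl⟩ <;>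
    simp [mem_blockOf, not_glue_rel_zero_gapEmb, glue_rel_zero_tailEmb, eq_comm]

lemma blockOf_glue_gapEmb (a : Fin j.1) :
    blockOf (glue j s₁ s₂) (gapEmb j a) = (blockOf s₁ a).image (gapEmb j) := by
  ext y
  rcases eq_zero_or_gapEmb_or_tailEmb j y with rfl | ⟨a', rfl⟩ | ⟨b, rfl⟩
  · simpa [mem_blockOf] using fun h => not_glue_rel_zero_gapEmb ((glue j s₁ s₂).iseqv.symm h)
  · simp [mem_blockOf, glue_rel_gapEmb]
  · simpa [mem_blockOf, eq_comm] using not_glue_rel_gapEmb_tailEmb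

lemma blockOf_glue_tailEmb {b : Fin (m - j.1)} (hb : b ∉ rootBlock s₂) :
    blockOf (glue j s₁ s₂) (tailEmb j b) = (blockOf s₂ b).image (tailEmb j) := by
  ext y
  rcases eq_zero_or_gapEmb_or_tailEmb j y with rfl | ⟨a, rfl⟩ | ⟨b', rfl⟩
  · simpa [mem_blockOf] using fun h => hb (glue_rel_zero_tailEmb.1 ((glue j s₁ s₂).iseqv.symm h))
  · simpa [mem_blockOf] using fun h => not_glue_rel_gapEmb_tailEmb ((glue j s₁ s₂).iseqv.symm h)
  · simp [mem_blockOf, glue_rel_tailEmb]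


lemma blocks_glue : blocks (glue j s₁ s₂) = insert (blockOf (glue j s₁ s₂) 0)
    ((blocks s₁).image (Finset.image (gapEmb j)) ∪
      ((blocks s₂).erase (rootBlock s₂)).image (Finset.image (tailEmb j))) := by
  ext B
  simp only [mem_blocks, Finset.mem_insert, Finset.mem_union, Finset.mem_image,
    Finset.mem_erase]
  constructor
  · rintro ⟨x, rfl⟩
    rcases eq_zero_or_gapEmb_or_tailEmb j x with rfl | ⟨a, rfl⟩ | ⟨b, rfl⟩
    · exact Or.inl rfl
    · exact Or.inr (Or.inl ⟨_, ⟨a, rfl⟩, (blockOf_glue_gapEmb a).symm⟩)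
    by_cases hb : b ∈ rootBlock s₂
    · exact Or.inl (blockOf_eq_of_rel (glue_rel_zero_tailEmb.2 hb)).symm
    · exact Or.inr (Or.inr ⟨_, ⟨mt blockOf_eq_rootBlock_iff.1 hb, b, rfl⟩,
        (blockOf_glue_tailEmb hb).symm⟩)
  · rintro (rfl | ⟨_, ⟨a, rfl⟩, rfl⟩ | ⟨_, ⟨hroot, b, rfl⟩, rfl⟩)
    · exact ⟨0, rfl⟩
    · exact ⟨gapEmb j a, (blockOf_glue_gapEmb a).symm⟩
    · exact ⟨tailEmb j b, (blockOf_glue_tailEmb (mt blockOf_eq_rootBlock_iff.2 hroot)).symm⟩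

lemma rootedWeight_glue (γ : ℕ → ℂ) (r : ℕ) :
    rootedWeight γ r (glue j s₁ s₂) = partWeight γ s₁ * rootedWeight γ (r + 1) s₂ := by
  have hroot : rootBlock (glue j s₁ s₂) = blockOf (glue j s₁ s₂) 0 := rootBlock_eq_blockOf _ rfl
  have hcard : (rootBlock (glue j s₁ s₂)).card + r = (rootBlock s₂).card + (r + 1) := by
    rw [hroot, blockOf_glue_zero, Finset.card_insert_of_notMem (by simp),
      Finset.card_image_of_injective _ (tailEmb_strictMono j).injective]
    ring
  have hnot : blockOf (glue j s₁ s₂) 0 ∉ (blocks s₁).image (Finset.image (gapEmb j)) ∪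
      ((blocks s₂).erase (rootBlock s₂)).image (Finset.image (tailEmb j)) := by
    intro h
    have h0 := mem_blockOf_self (glue j s₁ s₂) 0
    rcases Finset.mem_union.1 h with h | h <;> obtain ⟨B, -, hB⟩ := Finset.mem_image.1 h <;>
      rw [← hB] at h0 <;> simp at h0
  have hdisj : Disjoint ((blocks s₁).image (Finset.image (gapEmb j)))
      (((blocks s₂).erase (rootBlock s₂)).image (Finset.image (tailEmb j))) := by
    refine Finset.disjoint_left.2 fun B hB₁ hB₂ => ?_
    obtain ⟨B₁, hmem, rfl⟩ := Finset.mem_image.1 hB₁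
    obtain ⟨B₂, -, hB⟩ := Finset.mem_image.1 hB₂
    obtain ⟨a, ha⟩ := nonempty_of_mem_blocks hmem
    have := hB ▸ Finset.mem_image_of_mem (gapEmb j) ha
    simp at this
  have hgap := Finset.image_injective (gapEmb_strictMono j).injective
  have htail := Finset.image_injective (tailEmb_strictMono j).injective
  rw [rootedWeight, rootedWeight, partWeight, hcard, hroot, blocks_glue,
    Finset.erase_insert hnot, Finset.prod_union hdisj,
    Finset.prod_image fun _ _ _ _ h => hgap h, Finset.prod_image fun _ _ _ _ h => htail h]
  simp only [Finset.card_image_of_injective _ (gapEmb_strictMono j).injective,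
    Finset.card_image_of_injective _ (tailEmb_strictMono j).injective]
  ring

end GlueBlocks

section Split

variable {m : ℕ}

lemma rootGap_glue {j : Fin (m + 1)} {s₁ : Setoid (Fin j.1)} {s₂ : Setoid (Fin (m - j.1))} :
    rootGap (glue j s₁ s₂) = j.1 := by
  refine rootGap_eq (by omega) (fun y hy hy0 => ?_) (fun y hy => ?_)
  · obtain rfl | ⟨b, -, rfl⟩ := glue_rel_zero_cases hy
    · exact absurd rfl hy0
    · simp
  · have hpos : 0 < m - j.1 := by have := y.isLt; omega
    rw [show y = tailEmb j ⟨0, hpos⟩ from Fin.ext (by simp [hy]), glue_rel_zero_tailEmb]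
    exact mem_rootBlock_of_val_eq_zero s₂ rfl

variable {s : Setoid (Fin (m + 1))} {j : Fin (m + 1)}

lemma not_rel_zero_gapEmb (hj : j.1 = rootGap s) (a : Fin j.1) : ¬ s.r 0 (gapEmb j a) :=
  fun h => by
    have := a.isLt
    rcases rel_zero_cases h with h | h
    · exact gapEmb_ne_zero j a h
    · simp only [gapEmb_val] at h
      omega

lemma not_rel_gapEmb_tailEmb (hs : IsNC s) (hj : j.1 = rootGap s) (a : Fin j.1)
    (b : Fin (m - j.1)) : ¬ s.r (gapEmb j a) (tailEmb j b) := fun h => by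
  have := a.isLt
  have := (rel_mem_gap hs (by simp) (by simp only [gapEmb_val]; omega) h).2
  simp only [tailEmb_val] at this
  omega

lemma rel_zero_tailEmb_iff (hj : j.1 = rootGap s) (b : Fin (m - j.1)) :
    s.r 0 (tailEmb j b) ↔ b ∈ rootBlock (Setoid.comap (tailEmb j) s) := by
  have hz (z : Fin (m - j.1)) (hz : z.1 = 0) : s.r 0 (tailEmb j z) :=
    rel_zero_of_val_eq_rootGap_succ (by simp [hz, hj])
  rw [mem_rootBlock]
  refine ⟨fun h z hz' => s.iseqv.trans (s.iseqv.symm (hz z hz')) h, fun h => ?_⟩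
  have hz0 : (⟨0, by have := b.isLt; omega⟩ : Fin (m - j.1)).1 = 0 := rfl
  exact s.iseqv.trans (hz _ hz0) (h _ hz0)

lemma glue_comap (hs : IsNC s) (hj : j.1 = rootGap s) :
    glue j (Setoid.comap (gapEmb j) s) (Setoid.comap (tailEmb j) s) = s := by
  ext x y
  rcases eq_zero_or_gapEmb_or_tailEmb j x with rfl | ⟨a, rfl⟩ | ⟨a, rfl⟩ <;>
  rcases eq_zero_or_gapEmb_or_tailEmb j y with rfl | ⟨b, rfl⟩ | ⟨b, rfl⟩
  · exact iff_of_true ((glue _ _ _).iseqv.refl 0) (s.iseqv.refl 0)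
  · exact iff_of_false not_glue_rel_zero_gapEmb (not_rel_zero_gapEmb hj b)
  · rw [glue_rel_zero_tailEmb, rel_zero_tailEmb_iff hj]
  · rw [Setoid.comm', Setoid.comm' s]
    exact iff_of_false not_glue_rel_zero_gapEmb (not_rel_zero_gapEmb hj a)
  · exact glue_rel_gapEmb
  · exact iff_of_false not_glue_rel_gapEmb_tailEmb (not_rel_gapEmb_tailEmb hs hj a b)
  · rw [Setoid.comm', Setoid.comm' s, glue_rel_zero_tailEmb, rel_zero_tailEmb_iff hj]
  · rw [Setoid.comm', Setoid.comm' s]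
    exact iff_of_false not_glue_rel_gapEmb_tailEmb (not_rel_gapEmb_tailEmb hs hj b a)
  · exact glue_rel_tailEmb

def ncGlue (d : Σ j : Fin (m + 1), NC j.1 × NC (m - j.1)) : NC (m + 1) :=
  ⟨glue d.1 d.2.1.1 d.2.2.1, glue_isNC d.2.1.2 d.2.2.2⟩

lemma ncGlue_injective : Function.Injective (ncGlue (m := m)) := by
  rintro ⟨j, ⟨s₁, h₁⟩, ⟨s₂, h₂⟩⟩ ⟨j', ⟨s₁', h₁'⟩, ⟨s₂', h₂'⟩⟩ h
  have hs : glue j s₁ s₂ = glue j' s₁' s₂' := congrArg Subtype.val h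
  obtain rfl : j = j' := Fin.ext (by rw [← rootGap_glue (s₁ := s₁) (s₂ := s₂), hs, rootGap_glue])
  obtain rfl : s₁ = s₁' := Setoid.ext fun a b => by
    rw [← glue_rel_gapEmb (s₂ := s₂), hs, glue_rel_gapEmb]
  obtain rfl : s₂ = s₂' := Setoid.ext fun a b => by
    rw [← glue_rel_tailEmb (s₁ := s₁), hs, glue_rel_tailEmb]
  rfl

lemma ncGlue_surjective : Function.Surjective (ncGlue (m := m)) := fun π =>
  ⟨⟨⟨rootGap π.1, Nat.lt_succ_of_le (rootGap_le π.1)⟩, ⟨_, π.2.comap (gapEmb_strictMono _)⟩,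
    ⟨_, π.2.comap (tailEmb_strictMono _)⟩⟩, Subtype.ext (glue_comap π.2 rfl)⟩

lemma rootedNCSum_succ (γ : ℕ → ℂ) (r : ℕ) : rootedNCSum γ r (m + 1) =
    ∑ i ∈ Finset.range (m + 1), ncSum γ i * rootedNCSum γ (r + 1) (m - i) := by
  rw [rootedNCSum, ← Function.Bijective.sum_comp ⟨ncGlue_injective, ncGlue_surjective⟩,
    ← Finset.univ_sigma_univ, Finset.sum_sigma, ← Fin.sum_univ_eq_sum_range]
  refine Finset.sum_congr rfl fun j _ => ?_
  rw [ncSum, rootedNCSum, Finset.sum_mul_sum, ← Finset.univ_product_univ, Finset.sum_product]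
  exact Finset.sum_congr rfl fun π₁ _ => Finset.sum_congr rfl fun π₂ _ => rootedWeight_glue γ r

end Split

section GeneratingSeries

open PowerSeries

variable (γ : ℕ → ℂ)

def ncSeries : ℂ⟦X⟧ := mk (ncSum γ)

def rootedNCSeries (r : ℕ) : ℂ⟦X⟧ := mk (rootedNCSum γ r)

lemma rootedNCSeries_eq (r : ℕ) :
    rootedNCSeries γ r = C (γ r) + X * ncSeries γ * rootedNCSeries γ (r + 1) := by
  ext (_ | k)
  · simp [rootedNCSeries, rootedNCSum_zero]
  · rw [mul_assoc, map_add, coeff_C, if_neg k.succ_ne_zero, zero_add, coeff_succ_X_mul,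
      coeff_mul, Finset.Nat.sum_antidiagonal_eq_sum_range_succ_mk]
    simp [rootedNCSeries, ncSeries, rootedNCSum_succ]

lemma rootedNCSeries_zero_eq_sum (N : ℕ) : rootedNCSeries γ 0 =
    (∑ ℓ ∈ Finset.range (N + 1), C (γ ℓ) * (X * ncSeries γ) ^ ℓ) +
      (X * ncSeries γ) ^ (N + 1) * rootedNCSeries γ (N + 1) := by
  induction N with
  | zero => rw [rootedNCSeries_eq γ 0, Finset.sum_range_one]; ring
  | succ N ih => rw [Finset.sum_range_succ, ih, rootedNCSeries_eq γ (N + 1)]; ring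

lemma ncSeries_eq_psComp (T : ℂ⟦X⟧) (hT : constantCoeff T = 1) :
    ncSeries (coeff · T) = psComp T (X * ncSeries (coeff · T)) := by
  have hB : ncSeries (coeff · T) = rootedNCSeries (coeff · T) 0 := by
    ext (_ | k)
    · simp [ncSeries, rootedNCSeries, ncSum_zero, rootedNCSum_zero, hT]
    · simp [ncSeries, rootedNCSeries, ncSum_succ]
  ext k
  conv_lhs => rw [hB, rootedNCSeries_zero_eq_sum _ k]
  rw [map_add, coeff_pow_mul_eq_zero_of_lt (by simp) _ (Nat.lt_succ_self k), add_zero, map_sum,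
    psComp, coeff_mk]
  simp only [coeff_C_mul]

end GeneratingSeries

theorem R_coeff_from_inv_S_general (α : Dist 1)
    (S T : PowerSeries ℂ) (hS : SChar α S) (hT : S * T = 1)
    (n : ℕ) (hn : 2 ≤ n) :
    α ⟨n, fun _ => 0⟩ =
      ∑ π : NC (n - 1), ∏ B ∈ blocks π.1, PowerSeries.coeff (R := ℂ) B.card T := by
  open PowerSeries in
  have hT0 : constantCoeff T = 1 := by
    simpa [hS.1] using congrArg constantCoeff hT
  set F := X * ncSeries (coeff · T)
  have hF : HasSubst F := HasSubst.of_constantCoeff_zero' (by simp [F])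
  have hXS : HasSubst (X * S) := HasSubst.of_constantCoeff_zero' (by simp)
  have hR : Rser α = F := by
    refine eq_of_subst_eq_X hXS hF ?_ (subst_X_mul_eq_X hF hT ?_)
    · rw [← psComp_eq_subst (by simp), hS.2.1]
    · rw [← psComp_eq_subst (by simp [F])]
      exact congrArg (X * ·) (ncSeries_eq_psComp T hT0)
  obtain ⟨k, rfl⟩ : ∃ k, n = k + 2 := ⟨n - 2, by omega⟩
  have h := congrArg (coeff (k + 2)) hR
  rw [Rser, coeff_mk, if_neg (by omega), coeff_succ_X_mul, ncSeries, coeff_mk] at h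
  exact h

/-- Lemma 6.2.  For `μ ∈ G_1` with `R_μ(z) = z + ∑_{n≥2} α_n zⁿ`,
S-transform `S` and `T = 1/S = 1 + ∑ γ_n zⁿ`, one has, for every `n ≥ 2`,
`α_n = ∑_{π = {A_1,…,A_q} ∈ NC(n-1)} γ_{|A_1|} ⋯ γ_{|A_q|}`. -/
theorem R_coeff_from_inv_S (μ α : Dist 1) (hμ : InG μ) (hα : IsRTransform μ α)
    (S T : PowerSeries ℂ) (hS : SChar α S) (hT : S * T = 1)
    (n : ℕ) (hn : 2 ≤ n) :
    α ⟨n, fun _ => 0⟩ =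
      ∑ π : NC (n - 1), ∏ B ∈ blocks π.1, PowerSeries.coeff (R := ℂ) B.card T :=
  R_coeff_from_inv_S_general α S T hS hT n hn

end FreeProb

end
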